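/- Every k-burning maximal spider graph G has burning number exactly k. -/

import Mathlib

/-!
The spider head `c` is the centre `s` of the perfect spider, as `s` has three neighbours, so
every vertex other than `s` has degree at most two. Put `K = k - 1`. Two vertices of the far
region `{v | K < d(s, v)}` at distance at most `2K` lie on a common leg, where their distance is
the difference of their distances to `s`; hence `d(s, ·)` is injective on the part of the far
region plus `s` inside a ball of radius `r ≤ K`, which therefore has at most `2r + 1` vertices.
The far region has `1 + 3 + ⋯ + (2K - 1) = K²` vertices, so with `s` it cannot be covered by the
balls of radii `K - 1, …, 0` of a burning sequence of length at most `K`. Conversely, burning `s`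
first covers everything within distance `K` of `s`, and each path of order `2r + 1` of the
path-forest is burnt by a fire lit at its centre `r + 1` rounds before the end; by the same
count, no other vertex of the far region lies within distance `r` of that centre.
-/

/-- The set of burned vertices after `t` rounds, given fire sources `x`. -/
def burnedSet {V : Type*} (G : SimpleGraph V) {k : ℕ} (x : Fin k → V) : ℕ → Set V
  | 0 => ∅
  | t + 1 =>
      burnedSet G x t ∪ {v | ∃ u ∈ burnedSet G x t, G.Adj u v} ∪
        {v | ∃ h : t < k, v = x ⟨t, h⟩}

/-- `x` is a burning sequence: each source is unburned when chosen, and after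
round `k` every vertex is burned. -/
def IsBurningSeq {V : Type*} (G : SimpleGraph V) {k : ℕ} (x : Fin k → V) : Prop :=
  (∀ i : Fin k, x i ∉ burnedSet G x i) ∧ burnedSet G x k = Set.univ

/-- The burning number: the least length of a burning sequence. -/
noncomputable def burningNumber {V : Type*} (G : SimpleGraph V) : ℕ :=
  sInf {k | ∃ x : Fin k → V, IsBurningSeq G x}

lemma Finset.sum_range_two_mul_add_one (n : ℕ) :
    ∑ i ∈ Finset.range n, (2 * i + 1) = n ^ 2 := by
  induction n with
  | zero => simp
  | succ n ih => rw [Finset.sum_range_succ, ih]; ring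

namespace SimpleGraph

variable {V : Type*} {G : SimpleGraph V}

lemma Adj.dist_le_dist_add_one {u v w : V} (h : G.Adj v w) : G.dist u w ≤ G.dist u v + 1 := by
  simpa [dist_eq_one_iff_adj.mpr h] using h.reachable.dist_triangle_right u

lemma Connected.exists_adj_dist_add_one_eq (hG : G.Connected) {u v : V} (huv : u ≠ v) :
    ∃ w, G.Adj w v ∧ G.dist u w + 1 = G.dist u v := by
  obtain ⟨p, hp⟩ := hG.exists_walk_length_eq_dist v u
  have hnil : ¬p.Nil := fun h => huv h.eq.symm
  have htail : G.dist u p.snd ≤ p.tail.length := dist_comm (G := G) ▸ dist_le p.tail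
  have hstep := (p.adj_snd hnil).symm.dist_le_dist_add_one (u := u)
  have hlen := p.length_tail_add_one hnil
  rw [dist_comm] at hp
  exact ⟨p.snd, (p.adj_snd hnil).symm, by omega⟩

lemma Walk.exists_mem_support_eq {f : V → ℕ} (hf : ∀ ⦃a b⦄, G.Adj a b → f b ≤ f a + 1)
    {u v : V} (p : G.Walk u v) {t : ℕ} (hu : f u ≤ t) (hv : t ≤ f v) :
    ∃ w ∈ p.support, f w = t := by
  induction p with
  | nil => exact ⟨_, Walk.start_mem_support _, by omega⟩
  | @cons a b _ h q ih =>
    rcases hu.eq_or_lt with hu | hu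
    · exact ⟨a, Walk.start_mem_support _, hu⟩
    · obtain ⟨w, hw, hwt⟩ := ih (by have := hf h; omega) hv
      exact ⟨w, List.mem_cons_of_mem _ hw, hwt⟩

lemma dist_lt_ncard_of_connected_induce {A : Set V} (hA : A.Finite)
    (hconn : (G.induce A).Connected) {u v : V} (hu : u ∈ A) (hv : v ∈ A) :
    G.dist u v < A.ncard := by
  have := hA.fintype
  obtain ⟨p, hp, -⟩ := hconn.exists_path_of_dist ⟨u, hu⟩ ⟨v, hv⟩
  calc G.dist u v ≤ (p.map (Embedding.induce A).toHom).length := dist_le _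
    _ = p.length := Walk.length_map _ _
    _ < Fintype.card A := hp.length_lt
    _ = A.ncard := by rw [← Nat.card_coe_set_eq, Nat.card_eq_fintype_card]

end SimpleGraph

open SimpleGraph

section Burning

variable {V : Type*} {G : SimpleGraph V} {k : ℕ}

theorem burnedSet_eq (hG : G.Connected) (x : Fin k → V) (t : ℕ) :
    burnedSet G x t = {v | ∃ i : Fin k, G.dist (x i) v + i < t} := by
  induction t with
  | zero => simp [burnedSet]
  | succ t ih =>
    ext v
    simp only [burnedSet, ih, Set.mem_union, Set.mem_ofPred_eq]
    constructor
    · rintro ((⟨i, hi⟩ | ⟨u, ⟨i, hi⟩, hadj⟩) | ⟨ht, rfl⟩)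
      · exact ⟨i, by omega⟩
      · exact ⟨i, by have := hadj.dist_le_dist_add_one (u := x i); omega⟩
      · exact ⟨⟨t, ht⟩, by simp⟩
    · rintro ⟨i, hi⟩
      by_cases hlt : G.dist (x i) v + i < t
      · exact .inl (.inl ⟨i, hlt⟩)
      by_cases hv : x i = v
      · subst hv
        have hit : (i : ℕ) = t := by rw [dist_self] at hi hlt; omega
        exact .inr ⟨hit ▸ i.isLt, congrArg x (Fin.ext hit)⟩
      · obtain ⟨w, hwv, hw⟩ := hG.exists_adj_dist_add_one_eq hv
        exact .inl (.inr ⟨w, ⟨i, by omega⟩, hwv⟩)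

theorem isBurningSeq_iff (hG : G.Connected) (x : Fin k → V) :
    IsBurningSeq G x ↔
      (∀ i j : Fin k, (i : ℕ) ≤ G.dist (x j) (x i) + j) ∧
        ∀ v, ∃ i : Fin k, G.dist (x i) v + i < k := by
  simp only [IsBurningSeq, burnedSet_eq hG, Set.mem_ofPred_eq, not_exists, not_lt,
    Set.eq_univ_iff_forall]

theorem ncard_le_sq_of_isBurningSeq (hG : G.Connected) {x : Fin k → V} (hx : IsBurningSeq G x)
    {Q : Set V} (hQ : ∀ y (r : ℕ), r < k →
      ({v | G.dist y v ≤ r} ∩ Q).ncard ≤ 2 * r + 1) :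
    Q.ncard ≤ k ^ 2 := by
  have hcover := ((isBurningSeq_iff hG x).1 hx).2
  have hQ_eq : Q = ⋃ i : Fin k, {v | G.dist (x i) v ≤ k - 1 - i} ∩ Q := by
    ext v
    simp only [Set.mem_iUnion, Set.mem_inter_iff, Set.mem_ofPred_eq]
    refine ⟨fun hv => ?_, fun ⟨_, _, hv⟩ => hv⟩
    obtain ⟨i, hi⟩ := hcover v
    exact ⟨i, by omega, hv⟩
  calc Q.ncard = (⋃ i : Fin k, {v | G.dist (x i) v ≤ k - 1 - i} ∩ Q).ncard := congrArg _ hQ_eq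
    _ ≤ ∑ i : Fin k, ({v | G.dist (x i) v ≤ k - 1 - i} ∩ Q).ncard :=
      Set.ncard_iUnion_le_of_fintype _
    _ ≤ ∑ i : Fin k, (2 * (k - 1 - i) + 1) := Finset.sum_le_sum fun i _ => hQ _ _ (by omega)
    _ = k ^ 2 := by
      rw [Fin.sum_univ_eq_sum_range (fun i => 2 * (k - 1 - i) + 1),
        Finset.sum_range_reflect (fun i => 2 * i + 1), Finset.sum_range_two_mul_add_one]

end Burning

namespace SimpleGraph

variable {V : Type*} {G : SimpleGraph V}

lemma IsTree.eq_of_adj_of_dist_add_one_eq (hG : G.IsTree) {s w x y : V} (hx : G.Adj w x)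
    (hy : G.Adj w y) (hdx : G.dist s x + 1 = G.dist s w) (hdy : G.dist s y + 1 = G.dist s w) :
    x = y := by
  classical
  obtain ⟨p, hp, -⟩ := hG.connected.exists_path_of_dist s w
  suffices ∀ z, G.Adj w z → G.dist s z + 1 = G.dist s w → z = p.penultimate from
    (this x hx hdx).trans (this y hy hdy).symm
  intro z hz hdz
  obtain ⟨q, hq, hql⟩ := hG.connected.exists_path_of_dist s z
  have hwq : w ∉ q.support := fun hw => by
    have := (dist_le (q.takeUntil w hw)).trans (q.length_takeUntil_le_length hw)
    omega
  exact hG.isAcyclic.eq_penultimate_of_adj_end hp hz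
    (hG.isAcyclic.mem_support_of_ne_mem_support_of_adj_of_isPath hp hq hz hwq)

lemma three_le_ncard_neighborSet [Finite V] {v a b c : V} (ha : G.Adj v a) (hb : G.Adj v b)
    (hc : G.Adj v c) (hab : a ≠ b) (hac : a ≠ c) (hbc : b ≠ c) :
    3 ≤ (G.neighborSet v).ncard := by
  rw [← Set.ncard_eq_three.mpr ⟨a, b, c, hab, hac, hbc, rfl⟩]
  exact Set.ncard_le_ncard (by simp [Set.insert_subset_iff, ha, hb, hc])

section Spider

variable [Finite V] {s : V} (hG : G.IsTree)
  (hdeg : ∀ v, v ≠ s → (G.neighborSet v).ncard ≤ 2)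
include hG hdeg

lemma IsTree.dist_add_length_eq_or_of_notMem_support {u v : V} {p : G.Walk u v}
    (hp : p.IsPath) (hs : s ∉ p.support) :
    G.dist s u + p.length = G.dist s v ∨ G.dist s v + p.length = G.dist s u := by
  induction p with
  | nil => simp
  | @cons u b v h q ih =>
    rw [Walk.cons_isPath_iff] at hp
    rw [Walk.support_cons, List.mem_cons, not_or] at hs
    have hstep := hG.dist_eq_dist_add_one_of_adj s h
    cases q with
    | nil => simp only [Walk.length_cons, Walk.length_nil]; omega
    | @cons _ b' _ h' q' =>
      have hmono := ih hp.1 hs.2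
      have hstep' := hG.dist_eq_dist_add_one_of_adj s h'
      have h₁ : G.dist s v ≤ G.dist s b' + q'.length :=
        hG.connected.dist_triangle.trans (Nat.add_le_add_left (dist_le q') _)
      have h₂ : G.dist s b' ≤ G.dist s v + q'.length :=
        hG.connected.dist_triangle.trans
          (Nat.add_le_add_left (dist_comm (G := G) ▸ dist_le q') _)
      have hub' : u ≠ b' := fun e => hp.2 (by simp [e])
      simp only [Walk.length_cons] at hmono ⊢
      rcases hstep with hdown | hup <;> rcases hmono with hasc | hdesc
      · -- `b` would be a local minimum of the distance to `s`, hence have three neighbours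
        have hbs : b ≠ s := fun e => hs.2 (e ▸ Walk.start_mem_support _)
        obtain ⟨z, hzb, hz⟩ := hG.connected.exists_adj_dist_add_one_eq hbs.symm
        have := three_le_ncard_neighborSet h.symm h' hzb.symm hub'
          (fun e => by subst e; omega) (fun e => by subst e; omega)
        have := hdeg b hbs
        omega
      · omega
      · omega
      · exact absurd (hG.eq_of_adj_of_dist_add_one_eq (s := s) h.symm h' (by omega) (by omega))
          hub'

/-- Two vertices of a spider with head `s` lie on different legs (first case) or on a common
leg. -/
lemma IsTree.dist_eq_add_or_dist_add_eq (u v : V) :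
    G.dist u v = G.dist s u + G.dist s v ∨ G.dist u v + G.dist s u = G.dist s v ∨
      G.dist u v + G.dist s v = G.dist s u := by
  classical
  obtain ⟨p, hp, hpl⟩ := hG.connected.exists_path_of_dist u v
  by_cases hs : s ∈ p.support
  · have h₁ := dist_le (p.takeUntil s hs)
    have h₂ := dist_le (p.dropUntil s hs)
    have h₃ := congrArg Walk.length (p.take_spec hs)
    have h₄ := hG.connected.dist_triangle (u := u) (v := s) (w := v)
    rw [Walk.length_append] at h₃
    rw [dist_comm (u := u) (v := s)] at h₁ h₄
    omega
  · have := hG.dist_add_length_eq_or_of_notMem_support hdeg hp hs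
    omega

lemma IsTree.injOn_dist_ball_inter (K : ℕ) (y : V) {r : ℕ} (hr : r ≤ K) :
    Set.InjOn (G.dist s) ({v | G.dist y v ≤ r} ∩ insert s {v | K < G.dist s v}) := by
  rintro u ⟨hu, hu'⟩ v ⟨hv, hv'⟩ (huv : G.dist s u = G.dist s v)
  rw [← hG.connected.dist_eq_zero_iff]
  rcases hu' with rfl | hu'
  · simpa using huv.symm
  rcases hv' with rfl | hv'
  · simpa [dist_comm] using huv
  have hd := hG.connected.dist_triangle (u := u) (v := y) (w := v)
  rw [dist_comm (u := u) (v := y)] at hd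
  simp only [Set.mem_ofPred_eq] at hu hv hu' hv'
  rcases hG.dist_eq_add_or_dist_add_eq hdeg u v with h | h | h <;> omega

lemma IsTree.ncard_le_of_subset_ball_inter {K r : ℕ} (hr : r ≤ K) {y : V} {S : Set V}
    (hS : S ⊆ {v | G.dist y v ≤ r} ∩ insert s {v | K < G.dist s v}) :
    S.ncard ≤ 2 * r + 1 := by
  have hmaps : ∀ v ∈ S, G.dist s v ∈ Set.Icc (G.dist s y - r) (G.dist s y + r) := by
    intro v hv
    have hyv : G.dist y v ≤ r := (hS hv).1
    have h₁ := hG.connected.dist_triangle (u := s) (v := y) (w := v)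
    have h₂ := hG.connected.dist_triangle (u := s) (v := v) (w := y)
    rw [dist_comm (u := v)] at h₂
    exact ⟨by omega, by omega⟩
  calc S.ncard ≤ (Set.Icc (G.dist s y - r) (G.dist s y + r)).ncard :=
        Set.ncard_le_ncard_of_injOn _ hmaps ((hG.injOn_dist_ball_inter hdeg K y hr).mono hS)
    _ ≤ 2 * r + 1 := by rw [Set.ncard_Icc_nat]; omega

lemma IsTree.exists_center {K i : ℕ} (hi : i ≤ K) {A : Set V}
    (hAK : A ⊆ {v | K < G.dist s v}) (hA : (G.induce A).Connected) (hcard : A.ncard = 2 * i + 1) :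
    ∃ m ∈ A, ∀ v ∈ A, G.dist m v ≤ i := by
  have hfin : A.Finite := Set.toFinite A
  have hdiam : ∀ u ∈ A, ∀ v ∈ A, G.dist u v ≤ 2 * i := fun u hu v hv => by
    have := dist_lt_ncard_of_connected_induce hfin hA hu hv
    omega
  have hne : A.Nonempty := Set.nonempty_of_ncard_ne_zero (by omega)
  obtain ⟨a, ha, hamin⟩ := Set.exists_min_image A (G.dist s) hfin hne
  obtain ⟨b, hb, hbmax⟩ := Set.exists_max_image A (G.dist s) hfin hne
  obtain ⟨p⟩ := hA.preconnected ⟨a, ha⟩ ⟨b, hb⟩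
  obtain ⟨⟨m, hm⟩, -, hmt⟩ := Walk.exists_mem_support_eq (f := fun w : A => G.dist s w)
    (fun _ _ hxy => Adj.dist_le_dist_add_one (G := G) hxy) p
    (t := min (G.dist s a + i) (G.dist s b)) (le_min (Nat.le_add_right _ _) (hamin b hb))
    (min_le_right _ _)
  dsimp only at hmt
  have hba : G.dist s b ≤ G.dist s a + 2 * i :=
    hG.connected.dist_triangle.trans (Nat.add_le_add_left (hdiam a ha b hb) _)
  refine ⟨m, hm, fun v hv => ?_⟩
  have hav := hamin v hv
  have hvb := hbmax v hv
  have hmv := hdiam m hm v hv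
  have hm' : K < G.dist s m := hAK hm
  have hv' : K < G.dist s v := hAK hv
  rcases hG.dist_eq_add_or_dist_add_eq hdeg m v with h | h | h <;> omega

lemma IsTree.lt_dist_of_notMem {K i : ℕ} (hi : i ≤ K) {A : Set V} {m y : V}
    (hAK : A ⊆ {v | K < G.dist s v}) (hAm : ∀ v ∈ A, G.dist m v ≤ i)
    (hcard : A.ncard = 2 * i + 1)
    (hy : y ∈ insert s {v | K < G.dist s v}) (hyA : y ∉ A) : i < G.dist m y := by
  by_contra! hmy
  have := hG.ncard_le_of_subset_ball_inter hdeg hi (S := insert y A)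
    (Set.insert_subset ⟨hmy, hy⟩ fun v hv => ⟨hAm v hv, .inr (hAK hv)⟩)
  rw [Set.ncard_insert_of_notMem hyA] at this
  omega

variable {K : ℕ} {A : Fin K → Set V} (hunion : ⋃ i, A i = {v | K < G.dist s v})
  (hcard : ∀ i, (A i).ncard = 2 * i + 1)
include hunion hcard

lemma IsTree.le_length_of_isBurningSeq {n : ℕ} {x : Fin n → V} (hx : IsBurningSeq G x)
    (hdisj : ∀ i j, i ≠ j → Disjoint (A i) (A j)) : K + 1 ≤ n := by
  have hP : {v | K < G.dist s v}.ncard = K ^ 2 := by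
    rw [← hunion, Set.ncard_iUnion_of_finite (fun _ => Set.toFinite _) hdisj,
      finsum_eq_sum_of_fintype, Finset.sum_congr rfl fun i _ => hcard i,
      Fin.sum_univ_eq_sum_range (fun i => 2 * i + 1), Finset.sum_range_two_mul_add_one]
  have hQ : (insert s {v | K < G.dist s v}).ncard = K ^ 2 + 1 := by
    rw [Set.ncard_insert_of_notMem (by simp), hP]
  by_contra! hn
  have := ncard_le_sq_of_isBurningSeq hG.connected hx
    fun y r hr => hG.ncard_le_of_subset_ball_inter hdeg (K := K) (by omega) subset_rfl
  have := Nat.pow_le_pow_left (show n ≤ K by omega) 2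
  omega

lemma IsTree.exists_isBurningSeq (hdisj : ∀ i j, i ≠ j → Disjoint (A i) (A j))
    (hconn : ∀ i, (G.induce (A i)).Connected) : ∃ x : Fin (K + 1) → V, IsBurningSeq G x := by
  have hAK : ∀ i, A i ⊆ {v | K < G.dist s v} := fun i => hunion ▸ Set.subset_iUnion A i
  choose m hmA hm using fun i : Fin K =>
    hG.exists_center hdeg i.isLt.le (hAK i) (hconn i) (hcard i)
  -- the centre of `A r` is lit in round `K - r`
  refine ⟨Fin.cons s fun j => m j.rev, (isBurningSeq_iff hG.connected _).2 ⟨?_, ?_⟩⟩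
  · intro i j
    refine Fin.cases (by simp) (fun i => ?_) i
    refine Fin.cases ?_ (fun j => ?_) j
    · have : K < G.dist s (m i.rev) := hAK _ (hmA _)
      simp only [Fin.cons_zero, Fin.cons_succ, Fin.val_succ, Fin.val_zero]
      omega
    · simp only [Fin.cons_succ, Fin.val_succ]
      rcases eq_or_ne i j with rfl | hij
      · omega
      have := hG.lt_dist_of_notMem hdeg (j.rev.isLt.le) (hAK j.rev) (hm j.rev) (hcard j.rev)
        (.inr (hAK _ (hmA i.rev)))
        (Set.disjoint_left.1 (hdisj _ _ (Fin.rev_injective.ne hij)) (hmA i.rev))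
      rw [Fin.val_rev] at this
      omega
  · intro v
    by_cases hv : G.dist s v ≤ K
    · exact ⟨0, by simp; omega⟩
    · obtain ⟨i, hi⟩ := Set.mem_iUnion.1 (hunion ▸ (show K < G.dist s v by omega) :
        v ∈ ⋃ i, A i)
      refine ⟨i.rev.succ, ?_⟩
      have := hm i v hi
      simp only [Fin.cons_succ, Fin.rev_rev, Fin.val_succ, Fin.val_rev]
      omega

theorem IsTree.burningNumber_eq (hdisj : ∀ i j, i ≠ j → Disjoint (A i) (A j))
    (hconn : ∀ i, (G.induce (A i)).Connected) : burningNumber G = K + 1 :=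
  le_antisymm (Nat.sInf_le (hG.exists_isBurningSeq hdeg hunion hcard hdisj hconn))
    (le_csInf ⟨_, hG.exists_isBurningSeq hdeg hunion hcard hdisj hconn⟩
      fun _ ⟨_, hx⟩ => hG.le_length_of_isBurningSeq hdeg hunion hcard hx hdisj)

end Spider

end SimpleGraph

theorem burningNumber_kBMS_general {V : Type*} [Fintype V]
    (G : SimpleGraph V) (c s : V) (k : ℕ)
    (hconn : G.Connected) (hacyclic : G.IsAcyclic)
    (hother : ∀ v : V, v ≠ c → (G.neighborSet v).ncard ≤ 2)
    -- the ball `N_{k-1}[s]` induces a perfect spider of radius `k-1` centred at `s`: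
    (hps_center : 3 ≤ {u : V | G.Adj s u ∧ G.edist s u ≤ ((k - 1 : ℕ) : ℕ∞)}.ncard)
    -- … that is maximal: it partitions into subpaths of orders `1, 3, …, 2(k-1)-1`:
    (hmpf : ∃ A : Fin (k - 1) → Set V,
      (∀ i, A i ⊆ {v : V | ((k - 1 : ℕ) : ℕ∞) < G.edist s v}) ∧
      (∀ i j, i ≠ j → Disjoint (A i) (A j)) ∧
      (⋃ i, A i) = {v : V | ((k - 1 : ℕ) : ℕ∞) < G.edist s v} ∧
      (∀ i, (A i).ncard = 2 * (i : ℕ) + 1) ∧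
      (∀ i, (G.induce (A i)).Connected)) :
    burningNumber G = k := by
  have hsc : s = c := by
    by_contra hsc
    have hsub :
        {u : V | G.Adj s u ∧ G.edist s u ≤ ((k - 1 : ℕ) : ℕ∞)} ⊆ G.neighborSet s :=
      fun _ hu => hu.1
    have := Set.ncard_le_ncard hsub (Set.toFinite _)
    have := hother s hsc
    omega
  subst hsc
  obtain ⟨K, rfl⟩ : ∃ K, k = K + 1 := by
    refine Nat.exists_eq_add_one.2 (Nat.pos_of_ne_zero fun hk => ?_)
    subst hk
    simp only [Nat.zero_sub, Nat.cast_zero, nonpos_iff_eq_zero, edist_eq_zero_iff] at hps_center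
    have : {u : V | G.Adj s u ∧ s = u}.ncard = 0 :=
      (Set.ncard_eq_zero).2 (Set.eq_empty_of_forall_notMem fun _ hu => hu.1.ne hu.2)
    omega
  obtain ⟨A, -, hdisj, hunion, hcard, hconnA⟩ := hmpf
  have hfar : {v : V | ((K + 1 - 1 : ℕ) : ℕ∞) < G.edist s v} = {v | K < G.dist s v} := by
    ext v
    simp [← (hconn s v).coe_dist_eq_edist]
  rw [hfar] at hunion
  exact (IsTree.burningNumber_eq ⟨hconn, hacyclic⟩ hother hunion hcard hdisj hconnA)

/-- A `k`-burning maximal spider graph has burning number exactly `k`.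
`G` is a spider graph (tree with exactly one vertex `c` of degree ≥ 3) whose
vertex set decomposes into the ball `N_{k-1}[s]` (inducing a perfect spider of
radius `k-1` centred at `s`, where `d(s,c) ≤ k-1`) and its complement, which is a
maximal path-forest: a path-forest admitting a partition into (connected) subpaths
of orders `1, 3, …, 2(k-1) - 1`. -/
theorem burningNumber_kBMS {V : Type*} [Fintype V]
    (G : SimpleGraph V) (c s : V) (k : ℕ)
    (hconn : G.Connected) (hacyclic : G.IsAcyclic)
    (hhead : 3 ≤ (G.neighborSet c).ncard)
    (hother : ∀ v : V, v ≠ c → (G.neighborSet v).ncard ≤ 2)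
    (hsc : G.edist s c ≤ ((k - 1 : ℕ) : ℕ∞))
    -- the ball `N_{k-1}[s]` induces a perfect spider of radius `k-1` centred at `s`:
    (hps_center : 3 ≤ {u : V | G.Adj s u ∧ G.edist s u ≤ ((k - 1 : ℕ) : ℕ∞)}.ncard)
    (hps_deg : ∀ v : V, G.edist s v ≤ ((k - 1 : ℕ) : ℕ∞) → v ≠ s →
      {u : V | G.Adj v u ∧ G.edist s u ≤ ((k - 1 : ℕ) : ℕ∞)}.ncard ≤ 2)
    (hps_leaf : ∀ v : V, G.edist s v ≤ ((k - 1 : ℕ) : ℕ∞) → v ≠ s →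
      {u : V | G.Adj v u ∧ G.edist s u ≤ ((k - 1 : ℕ) : ℕ∞)}.ncard = 1 →
      G.edist s v = ((k - 1 : ℕ) : ℕ∞))
    -- the complement is a path-forest …
    (hpf_deg : ∀ v : V, ((k - 1 : ℕ) : ℕ∞) < G.edist s v →
      {u : V | G.Adj v u ∧ ((k - 1 : ℕ) : ℕ∞) < G.edist s u}.ncard ≤ 2)
    -- … that is maximal: it partitions into subpaths of orders `1, 3, …, 2(k-1)-1`:
    (hmpf : ∃ A : Fin (k - 1) → Set V,
      (∀ i, A i ⊆ {v : V | ((k - 1 : ℕ) : ℕ∞) < G.edist s v}) ∧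
      (∀ i j, i ≠ j → Disjoint (A i) (A j)) ∧
      (⋃ i, A i) = {v : V | ((k - 1 : ℕ) : ℕ∞) < G.edist s v} ∧
      (∀ i, (A i).ncard = 2 * (i : ℕ) + 1) ∧
      (∀ i, (G.induce (A i)).Connected)) :
    burningNumber G = k :=
  burningNumber_kBMS_general G c s k hconn hacyclic hother hps_center hmpf
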